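/- There exists a finite MDP and a state s⁻ such that V*(s⁻) − V*_k(s⁻) = 2γR/(1−γ) for all persistences k ≥ 2, i.e., the performance loss bound 2γR_max/(1−γ) is tight: concretely in the 4-state MDP where from s⁻ action a₁ leads to s₁ with reward 0 and action a₂ leads to absorbing state s₃ with reward −R thereafter, from s₁ action a₂ leads to absorbing state s₂ with reward R thereafter and action a₁ leads to s₃, one has V*(s⁻) = γR/(1−γ) while V*_k(s⁻) = −γR/(1−γ) for every k ≥ 2. -/

import Mathlib

inductive St | sm | s1 | s2 | s3
deriving DecidableEq

inductive Ac | a1 | a2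
deriving DecidableEq

def step : St → Ac → St
  | .sm, .a1 => .s1
  | .sm, .a2 => .s3
  | .s1, .a2 => .s2
  | .s1, .a1 => .s3
  | .s2, _ => .s2
  | .s3, _ => .s3

def rew (R : ℝ) : St → Ac → ℝ
  | .sm, _ => 0
  | .s1, .a2 => R
  | .s1, .a1 => -R
  | .s2, _ => R
  | .s3, _ => -R

def traj (s : St) (a : ℕ → Ac) : ℕ → St
  | 0 => s
  | t + 1 => step (traj s a t) (a t)

noncomputable def ret (γ R : ℝ) (s : St) (a : ℕ → Ac) : ℝ :=
  ∑' t : ℕ, γ ^ t * rew R (traj s a t) (a t)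

/-- Optimal value function of the deterministic MDP. -/
noncomputable def Vstar (γ R : ℝ) (s : St) : ℝ :=
  ⨆ a : ℕ → Ac, ret γ R s a

/-- Optimal value function at persistence `k`: the supremum over action sequences that
are constant over consecutive blocks of length `k`. -/
noncomputable def Vpers (γ R : ℝ) (k : ℕ) (s : St) : ℝ :=
  ⨆ a : {a : ℕ → Ac // ∀ t, a t = a (k * (t / k))}, ret γ R s a.1

/-!
Every return from `s⁻` collects reward `0` at time `0` and at most `R` afterwards, so
`V*(s⁻) ≤ γR/(1-γ)`, with equality for `a₁, a₂, a₂, …`. A `k`-persistent sequence with `k ≥ 2`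
plays the same action at times `0` and `1`: `a₂` falls into `s₃` at once, and `a₁, a₁` passes
through `s₁` into `s₃` while collecting `-R`. Either way every reward after time `0` is `-R`.
-/

lemma ciSup_eq_of_forall_le_of_eq {ι α : Type*} [ConditionallyCompleteLattice α] {f : ι → α}
    {b : α} (h : ∀ i, f i ≤ b) (i : ι) (hi : f i = b) : ⨆ i, f i = b :=
  IsGreatest.csSup_eq ⟨⟨i, hi⟩, by rintro _ ⟨j, rfl⟩; exact h j⟩

section Discounted

variable {γ : ℝ}

lemma summable_pow_mul_of_abs_le (hγ : |γ| < 1) {g : ℕ → ℝ} {C : ℝ} (hg : ∀ t, |g t| ≤ C) :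
    Summable fun t => γ ^ t * g t := by
  refine Summable.of_norm_bounded ((summable_geometric_of_abs_lt_one hγ).abs.mul_right C) ?_
  intro t
  rw [Real.norm_eq_abs, abs_mul, abs_pow]
  exact mul_le_mul_of_nonneg_left (hg t) (pow_nonneg (abs_nonneg γ) t)

lemma hasSum_pow_succ_mul (hγ : |γ| < 1) (c : ℝ) :
    HasSum (fun t => γ ^ (t + 1) * c) (γ * c / (1 - γ)) := by
  have hterm : (fun t : ℕ => γ ^ (t + 1) * c) = fun t => γ * c * γ ^ t := by
    ext t; ring
  rw [hterm, div_eq_mul_inv]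
  exact (hasSum_geometric_of_abs_lt_one hγ).mul_left (γ * c)

lemma tsum_pow_mul_eq_of_tail_eq (hγ : |γ| < 1) {g : ℕ → ℝ} {c : ℝ} (h0 : g 0 = 0)
    (hc : ∀ t, g (t + 1) = c) : ∑' t, γ ^ t * g t = γ * c / (1 - γ) := by
  have hsum : HasSum (fun t => γ ^ (t + 1) * g (t + 1)) (γ * c / (1 - γ)) := by
    simpa only [hc] using hasSum_pow_succ_mul hγ c
  rw [tsum_eq_zero_add' hsum.summable, hsum.tsum_eq, h0, mul_zero, zero_add]

lemma tsum_pow_mul_le_of_tail_le (hγ0 : 0 ≤ γ) (hγ1 : γ < 1) {g : ℕ → ℝ} {C c : ℝ}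
    (hg : ∀ t, |g t| ≤ C) (h0 : g 0 = 0) (hc : ∀ t, g (t + 1) ≤ c) :
    ∑' t, γ ^ t * g t ≤ γ * c / (1 - γ) := by
  have hγ : |γ| < 1 := by rwa [abs_of_nonneg hγ0]
  have hsum := summable_pow_mul_of_abs_le hγ hg
  rw [hsum.tsum_eq_zero_add, h0, mul_zero, zero_add]
  exact hasSum_le (fun t => mul_le_mul_of_nonneg_left (hc t) (pow_nonneg hγ0 _))
    ((summable_nat_add_iff 1).2 hsum).hasSum (hasSum_pow_succ_mul hγ c)

end Discounted

section MDP

variable {R : ℝ} {a : ℕ → Ac}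

lemma traj_add_of_absorbing {s z : St} (hz : ∀ b, step z b = z) {n : ℕ}
    (h : traj s a n = z) (m : ℕ) : traj s a (n + m) = z := by
  induction m with
  | zero => exact h
  | succ m ih => rw [← add_assoc, traj, ih, hz]

lemma rew_s2 (b : Ac) : rew R .s2 b = R := by cases b <;> rfl

lemma rew_s3 (b : Ac) : rew R .s3 b = -R := by cases b <;> rfl

lemma rew_le (hR : 0 ≤ R) (s : St) (b : Ac) : rew R s b ≤ R := by
  cases s <;> cases b <;> simp only [rew] <;> linarith

lemma abs_rew_le (hR : 0 ≤ R) (s : St) (b : Ac) : |rew R s b| ≤ R := by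
  cases s <;> cases b <;> simp [rew, abs_of_nonneg hR, hR]

lemma rew_traj_sm_zero : rew R (traj .sm a 0) (a 0) = 0 := by
  cases a 0 <;> rfl

lemma ret_sm_le (hR : 0 ≤ R) {γ : ℝ} (hγ0 : 0 ≤ γ) (hγ1 : γ < 1) (a : ℕ → Ac) :
    ret γ R .sm a ≤ γ * R / (1 - γ) :=
  tsum_pow_mul_le_of_tail_le hγ0 hγ1 (fun _ => abs_rew_le hR _ _) rew_traj_sm_zero
    (fun _ => rew_le hR _ _)

lemma ret_sm_a1_then_a2 {γ : ℝ} (hγ : |γ| < 1) :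
    ret γ R .sm (fun t => if t = 0 then .a1 else .a2) = γ * R / (1 - γ) := by
  refine tsum_pow_mul_eq_of_tail_eq hγ rew_traj_sm_zero fun t => ?_
  rcases t with _ | t
  · rfl
  · rw [show t + 1 + 1 = 2 + t by ring, traj_add_of_absorbing (z := .s2) (fun _ => rfl) rfl,
      rew_s2]

lemma ret_sm_of_apply_one_eq (ha : a 1 = a 0) {γ : ℝ} (hγ : |γ| < 1) :
    ret γ R .sm a = -(γ * R / (1 - γ)) := by
  rw [← neg_div, ← mul_neg]
  refine tsum_pow_mul_eq_of_tail_eq hγ rew_traj_sm_zero fun t => ?_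
  cases h0 : a 0 with
  | a1 =>
    rcases t with _ | t
    · simp only [traj, h0, ha, step, rew]
    · have h2 : traj .sm a 2 = .s3 := by simp only [traj, h0, ha, step]
      rw [show t + 1 + 1 = 2 + t by ring, traj_add_of_absorbing (fun _ => rfl) h2, rew_s3]
  | a2 =>
    have h1 : traj .sm a 1 = .s3 := by simp only [traj, h0, step]
    rw [add_comm, traj_add_of_absorbing (fun _ => rfl) h1, rew_s3]

end MDP

lemma apply_one_eq_apply_zero_of_persistent {α : Type*} {k : ℕ} (hk : 2 ≤ k) {a : ℕ → α}
    (ha : ∀ t, a t = a (k * (t / k))) : a 1 = a 0 := by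
  rw [ha 1, Nat.div_eq_of_lt (by omega), mul_zero]

theorem stmt_8 (R γ : ℝ) (hR : 0 < R) (hγ0 : 0 < γ) (hγ1 : γ < 1)
    (k : ℕ) (hk : 2 ≤ k) :
    Vstar γ R St.sm = γ * R / (1 - γ) ∧
      Vpers γ R k St.sm = -(γ * R / (1 - γ)) ∧
      Vstar γ R St.sm - Vpers γ R k St.sm = 2 * γ * R / (1 - γ) := by
  have hγ : |γ| < 1 := by rwa [abs_of_pos hγ0]
  have hVstar : Vstar γ R .sm = γ * R / (1 - γ) :=
    ciSup_eq_of_forall_le_of_eq (ret_sm_le hR.le hγ0.le hγ1) _ (ret_sm_a1_then_a2 hγ)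
  have hVpers : Vpers γ R k .sm = -(γ * R / (1 - γ)) := by
    have hret (a : {a : ℕ → Ac // ∀ t, a t = a (k * (t / k))}) :
        ret γ R .sm a.1 = -(γ * R / (1 - γ)) :=
      ret_sm_of_apply_one_eq (apply_one_eq_apply_zero_of_persistent hk a.2) hγ
    exact ciSup_eq_of_forall_le_of_eq (fun a => (hret a).le) ⟨fun _ => .a2, fun _ => rfl⟩
      (hret _)
  refine ⟨hVstar, hVpers, ?_⟩
  rw [hVstar, hVpers]
  ring
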